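/- arXiv:1704.07099 — 2 statements merged into one kernel-verified Lean document; each statement's English description precedes it below -/
import Mathlib

section
/- Let (X, ℰ_v) be a rooted tree and ℰ_h a symmetric set of horizontal edges such that (x,y) ∈ ℰ_h implies |x| = |y| and either x⁻ = y⁻ or (x⁻,y⁻) ∈ ℰ_h (where x⁻ is the parent of x). If the lengths of horizontal geodesics in (X, ℰ_v ∪ ℰ_h) are uniformly bounded by a constant M, then X is Gromov hyperbolic with δ depending only on M. -/
/-!
Every walk in an augmented tree can be replaced, without getting longer, by a canonical one: up
from `x` to its ancestor at some level `l`, horizontally inside level `l`, and down to `y`. The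
reason is that the parent map sends a horizontal edge to a horizontal edge or a single vertex, so
horizontal segments can be pushed down a level at no cost. For a geodesic the horizontal segment is a
horizontal geodesic, hence of length at most `M`, and it stays that short when pushed further down.

As `d(o, x) = |x|`, the Gromov product `(x|z)` is at most the level `l₁` of a canonical
geodesic from `x` to `z`, and likewise `(z|y) ≤ l₂`. At level `n = min l₁ l₂` the ancestors of
`x` and `z`, and those of `z` and `y`, are within distance `M`, so
`d(x, y) ≤ |x| + |y| - 2n + 2M`, that is `(x|y) ≥ min ((x|z), (z|y)) - M`.
-/

/-- The augmented tree graph: vertical edges given by the parent map `p`,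
together with horizontal edges `Eh`. -/
def augmentedGraph {X : Type*} (p : X → X) (Eh : X → X → Prop) : SimpleGraph X where
  Adj x y := x ≠ y ∧ (p x = y ∨ p y = x ∨ Eh x y ∨ Eh y x)
  symm := by
    constructor
    intro x y h
    refine ⟨h.1.symm, ?_⟩
    rcases h.2 with h' | h' | h' | h' <;> tauto
  loopless := ⟨fun x h => h.1 rfl⟩

open SimpleGraph Function

theorem SimpleGraph.Walk.exists_walk_length_le_of_mapsTo {V W : Type*} {G : SimpleGraph V}
    {G' : SimpleGraph W} {f : V → W} {s : Set V} {t : Set W} (hst : Set.MapsTo f s t)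
    (hf : ∀ ⦃x y⦄, x ∈ s → y ∈ s → G.Adj x y → f x = f y ∨ G'.Adj (f x) (f y)) :
    ∀ {u v : V} (w : G.Walk u v), (∀ x ∈ w.support, x ∈ s) →
      ∃ w' : G'.Walk (f u) (f v), w'.length ≤ w.length ∧ ∀ y ∈ w'.support, y ∈ t
  | _, _, .nil, hw => ⟨.nil, le_rfl, by simpa using hst (hw _ (by simp))⟩
  | _, _, .cons hadj rest, hw => by
    simp only [Walk.support_cons, List.mem_cons, forall_eq_or_imp] at hw
    obtain ⟨w', hlen, hw'⟩ := exists_walk_length_le_of_mapsTo hst hf rest hw.2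
    rcases hf hw.1 (hw.2 _ rest.start_mem_support) hadj with heq | hadj'
    · exact ⟨w'.copy heq.symm rfl, by simp; omega, by simpa using hw'⟩
    · refine ⟨.cons hadj' w', by simp; omega, ?_⟩
      simpa only [Walk.support_cons, List.mem_cons, forall_eq_or_imp] using ⟨hst hw.1, hw'⟩

section AugmentedTree

variable {X : Type*}

structure IsAugmentedTree (o : X) (p : X → X) (lvl : X → ℕ) (Eh : X → X → Prop) : Prop where
  horizontal : ∀ x y, Eh x y → lvl x = lvl y ∧ (p x = p y ∨ Eh (p x) (p y))
  level_root : lvl o = 0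
  parent_root : p o = o
  level_parent_add_one : ∀ x, x ≠ o → lvl (p x) + 1 = lvl x

def ancestor (p : X → X) (lvl : X → ℕ) (n : ℕ) (x : X) : X := p^[lvl x - n] x

/-- A canonical path in the sense of Lau–Wang: up from `x` to its ancestor at level `l`, inside
level `l`, then down to `y`; its length is at most `L`. -/
def HasCanonicalPath (p : X → X) (Eh : X → X → Prop) (lvl : X → ℕ) (x y : X) (L : ℕ) : Prop :=
  ∃ l ≤ lvl x, l ≤ lvl y ∧ ∃ h : (augmentedGraph p Eh).Walk (ancestor p lvl l x)
    (ancestor p lvl l y), (∀ v ∈ h.support, lvl v = l) ∧ lvl x - l + h.length + (lvl y - l) ≤ L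

noncomputable def gromovProduct {V : Type*} (G : SimpleGraph V) (o x y : V) : ℝ :=
  ((G.dist o x : ℝ) + G.dist o y - G.dist x y) / 2

variable {o : X} {p : X → X} {lvl : X → ℕ} {Eh : X → X → Prop}

theorem exists_walk_iterate_parent (k : ℕ) (x : X) :
    ∃ w : (augmentedGraph p Eh).Walk x (p^[k] x), w.length ≤ k := by
  induction k with
  | zero => exact ⟨.nil, le_rfl⟩
  | succ k ih =>
    obtain ⟨w, hw⟩ := ih
    rw [iterate_succ_apply']
    by_cases h : p^[k] x = p (p^[k] x)
    · exact ⟨w.copy rfl h, by simp; omega⟩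
    · have hadj : (augmentedGraph p Eh).Adj (p^[k] x) (p (p^[k] x)) := ⟨h, .inl rfl⟩
      exact ⟨w.concat hadj, by simp; omega⟩

theorem dist_ancestor_le (n : ℕ) (x : X) :
    (augmentedGraph p Eh).dist x (ancestor p lvl n x) ≤ lvl x - n :=
  let ⟨w, hw⟩ := exists_walk_iterate_parent (Eh := Eh) (lvl x - n) x
  (dist_le w).trans hw

namespace IsAugmentedTree

theorem level_parent (hT : IsAugmentedTree o p lvl Eh) (x : X) : lvl (p x) = lvl x - 1 := by
  by_cases hx : x = o
  · rw [hx, hT.parent_root, hT.level_root]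
  · have := hT.level_parent_add_one x hx
    omega

theorem level_iterate_parent (hT : IsAugmentedTree o p lvl Eh) (k : ℕ) (x : X) :
    lvl (p^[k] x) = lvl x - k := by
  induction k with
  | zero => rfl
  | succ k ih => rw [iterate_succ_apply', hT.level_parent, ih, Nat.sub_sub]

theorem level_ancestor (hT : IsAugmentedTree o p lvl Eh) {n : ℕ} {x : X} (hn : n ≤ lvl x) :
    lvl (ancestor p lvl n x) = n := by
  rw [ancestor, hT.level_iterate_parent]
  omega

theorem eq_root_of_level_eq_zero (hT : IsAugmentedTree o p lvl Eh) {x : X} (hx : lvl x = 0) :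
    x = o := by
  by_contra hne
  have := hT.level_parent_add_one x hne
  omega

theorem ancestor_zero (hT : IsAugmentedTree o p lvl Eh) (x : X) : ancestor p lvl 0 x = o :=
  hT.eq_root_of_level_eq_zero (hT.level_ancestor (Nat.zero_le _))

theorem ancestor_ancestor (hT : IsAugmentedTree o p lvl Eh) {n m : ℕ} (hnm : n ≤ m) (x : X) :
    ancestor p lvl n (ancestor p lvl m x) = ancestor p lvl n x := by
  by_cases hm : m ≤ lvl x
  · rw [ancestor, hT.level_ancestor hm, ancestor, ancestor, ← iterate_add_apply]
    congr 1
    omega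
  · simp [ancestor, Nat.sub_eq_zero_of_le (Nat.le_of_not_le hm)]

theorem ancestor_parent (hT : IsAugmentedTree o p lvl Eh) {n : ℕ} {x : X} (hn : n < lvl x) :
    ancestor p lvl n (p x) = ancestor p lvl n x := by
  rw [ancestor, ancestor, hT.level_parent, ← iterate_succ_apply]
  congr 1
  omega

theorem level_le_of_adj (hT : IsAugmentedTree o p lvl Eh) {x y : X}
    (h : (augmentedGraph p Eh).Adj x y) : lvl y ≤ lvl x + 1 := by
  obtain ⟨hne, rfl | rfl | hxy | hyx⟩ := h
  · rw [hT.level_parent]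
    omega
  · have hy : y ≠ o := by
      rintro rfl
      exact hne hT.parent_root
    have := hT.level_parent_add_one y hy
    omega
  · exact (hT.horizontal x y hxy).1 ▸ Nat.le_succ _
  · exact (hT.horizontal y x hyx).1 ▸ Nat.le_succ _

theorem level_le_add_length (hT : IsAugmentedTree o p lvl Eh) {x y : X} :
    ∀ w : (augmentedGraph p Eh).Walk x y, lvl y ≤ lvl x + w.length
  | .nil => le_rfl
  | .cons h w => by
    have := hT.level_le_of_adj h
    have := hT.level_le_add_length w
    simp only [Walk.length_cons]
    omega

theorem reachable_root (hT : IsAugmentedTree o p lvl Eh) (x : X) :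
    (augmentedGraph p Eh).Reachable x o := by
  obtain ⟨w, -⟩ := exists_walk_iterate_parent (Eh := Eh) (lvl x - 0) x
  exact ⟨w.copy rfl (hT.ancestor_zero x)⟩

theorem connected (hT : IsAugmentedTree o p lvl Eh) : (augmentedGraph p Eh).Connected :=
  (SimpleGraph.connected_iff_exists_forall_reachable _).mpr
    ⟨o, fun x => (hT.reachable_root x).symm⟩

theorem dist_root (hT : IsAugmentedTree o p lvl Eh) (x : X) :
    (augmentedGraph p Eh).dist o x = lvl x := by
  refine le_antisymm ?_ ?_
  · rw [SimpleGraph.dist_comm, ← hT.ancestor_zero x]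
    exact (dist_ancestor_le 0 x).trans (Nat.sub_le _ _)
  · obtain ⟨w, hw⟩ := (hT.reachable_root x).symm.exists_walk_length_eq_dist
    have := hT.level_le_add_length w
    rw [hT.level_root] at this
    omega

theorem dist_le_dist_ancestor (hT : IsAugmentedTree o p lvl Eh) (n : ℕ) (x y : X) :
    (augmentedGraph p Eh).dist x y ≤
      lvl x - n + (augmentedGraph p Eh).dist (ancestor p lvl n x) (ancestor p lvl n y) +
        (lvl y - n) := by
  have hx := hT.connected.dist_triangle (u := x) (v := ancestor p lvl n x) (w := y)
  have hy := hT.connected.dist_triangle (u := ancestor p lvl n x) (v := ancestor p lvl n y) (w := y)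
  have hxn := dist_ancestor_le (p := p) (lvl := lvl) (Eh := Eh) n x
  have hyn := dist_ancestor_le (p := p) (lvl := lvl) (Eh := Eh) n y
  rw [SimpleGraph.dist_comm (u := ancestor p lvl n y)] at hy
  omega

theorem gromovProduct_eq (hT : IsAugmentedTree o p lvl Eh) (x y : X) :
    gromovProduct (augmentedGraph p Eh) o x y =
      ((lvl x : ℝ) + lvl y - (augmentedGraph p Eh).dist x y) / 2 := by
  rw [gromovProduct, hT.dist_root, hT.dist_root]

theorem horizontal_of_adj_of_level_eq (hT : IsAugmentedTree o p lvl Eh) {x y : X}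
    (h : (augmentedGraph p Eh).Adj x y) (hl : lvl x = lvl y) : Eh x y ∨ Eh y x := by
  have hparent : ∀ {u}, lvl (p u) = lvl u → p u = u := fun {u} hu => by
    have hu0 : lvl u = 0 := by rw [hT.level_parent] at hu; omega
    rw [hT.eq_root_of_level_eq_zero hu0, hT.parent_root]
  obtain ⟨hne, rfl | rfl | hxy | hyx⟩ := h
  · exact absurd (hparent hl.symm).symm hne
  · exact absurd (hparent hl) hne
  · exact .inl hxy
  · exact .inr hyx

theorem parent_eq_or_adj (hT : IsAugmentedTree o p lvl Eh) {x y : X}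
    (h : (augmentedGraph p Eh).Adj x y) (hl : lvl x = lvl y) :
    p x = p y ∨ (augmentedGraph p Eh).Adj (p x) (p y) := by
  by_cases heq : p x = p y
  · exact .inl heq
  refine .inr ⟨heq, ?_⟩
  rcases hT.horizontal_of_adj_of_level_eq h hl with hxy | hyx
  · exact .inr (.inr (.inl ((hT.horizontal x y hxy).2.resolve_left heq)))
  · exact .inr (.inr (.inr ((hT.horizontal y x hyx).2.resolve_left (Ne.symm heq))))

theorem iterate_parent_eq_or_adj (hT : IsAugmentedTree o p lvl Eh) {x y : X}
    (h : (augmentedGraph p Eh).Adj x y) (hl : lvl x = lvl y) (k : ℕ) :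
    p^[k] x = p^[k] y ∨ (augmentedGraph p Eh).Adj (p^[k] x) (p^[k] y) := by
  induction k with
  | zero => exact .inr h
  | succ k ih =>
    rw [iterate_succ_apply', iterate_succ_apply']
    rcases ih with heq | hadj
    · exact .inl (congrArg p heq)
    · exact hT.parent_eq_or_adj hadj
        (by rw [hT.level_iterate_parent, hT.level_iterate_parent, hl])

theorem exists_walk_ancestor_of_level_eq (hT : IsAugmentedTree o p lvl Eh) {n m : ℕ}
    (hnm : n ≤ m) {u v : X} (w : (augmentedGraph p Eh).Walk u v)
    (hw : ∀ x ∈ w.support, lvl x = m) :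
    ∃ w' : (augmentedGraph p Eh).Walk (ancestor p lvl n u) (ancestor p lvl n v),
      w'.length ≤ w.length ∧ ∀ x ∈ w'.support, lvl x = n :=
  Walk.exists_walk_length_le_of_mapsTo (s := {x | lvl x = m}) (t := {x | lvl x = n})
    (fun _ hx => hT.level_ancestor (hnm.trans_eq (Eq.symm hx)))
    (fun x y hx hy hxy => by
      simp only [ancestor, Set.mem_ofPred_eq] at hx hy ⊢
      rw [hx, hy]
      exact hT.iterate_parent_eq_or_adj hxy (hx.trans hy.symm) _)
    w hw

theorem hasCanonicalPath_cons_of_parent_eq (hT : IsAugmentedTree o p lvl Eh) {x b y : X}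
    {L : ℕ} (hxb : (augmentedGraph p Eh).Adj x b) (hb : p x = b)
    (h : HasCanonicalPath p Eh lvl b y L) :
    HasCanonicalPath p Eh lvl x y (L + 1) := by
  subst hb
  obtain ⟨l, hlb, hly, h, hh, hlen⟩ := h
  have hx : x ≠ o := fun hx => hxb.1 (by rw [hx, hT.parent_root])
  have hlvl := hT.level_parent_add_one x hx
  refine ⟨l, by omega, hly, h.copy (hT.ancestor_parent (by omega)) rfl, by simpa using hh, ?_⟩
  rw [Walk.length_copy]
  omega

theorem hasCanonicalPath_cons_of_eq_parent (hT : IsAugmentedTree o p lvl Eh) {x b y : X}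
    {L : ℕ} (hxb : (augmentedGraph p Eh).Adj x b) (hb : p b = x)
    (h : HasCanonicalPath p Eh lvl b y L) :
    HasCanonicalPath p Eh lvl x y (L + 1) := by
  subst hb
  obtain ⟨l, hlb, hly, h, hh, hlen⟩ := h
  have hb : b ≠ o := fun hb => hxb.1 (by rw [hb, hT.parent_root])
  have hlvl := hT.level_parent_add_one b hb
  by_cases hl : l < lvl b
  · refine ⟨l, by omega, hly, h.copy (hT.ancestor_parent hl).symm rfl, by simpa using hh, ?_⟩
    rw [Walk.length_copy]
    omega
  -- Now `l = lvl b`: the horizontal segment starts at `b` and is pushed down one level.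
  obtain ⟨h', hlen', hh'⟩ :=
    hT.exists_walk_ancestor_of_level_eq (n := lvl (p b)) (by omega) h hh
  have hstart :
      ancestor p lvl (lvl (p b)) (ancestor p lvl l b) = ancestor p lvl (lvl (p b)) (p b) := by
    rw [hT.ancestor_ancestor (by omega), hT.ancestor_parent (by omega)]
  refine ⟨lvl (p b), le_rfl, by omega,
    h'.copy hstart (hT.ancestor_ancestor (by omega) y), by simpa using hh', ?_⟩
  rw [Walk.length_copy]
  omega

theorem hasCanonicalPath_cons_of_level_eq (hT : IsAugmentedTree o p lvl Eh) {x b y : X}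
    {L : ℕ} (hxb : (augmentedGraph p Eh).Adj x b) (hl : lvl x = lvl b)
    (h : HasCanonicalPath p Eh lvl b y L) :
    HasCanonicalPath p Eh lvl x y (L + 1) := by
  obtain ⟨l, hlb, hly, h, hh, hlen⟩ := h
  obtain ⟨e, he, hle⟩ := hT.exists_walk_ancestor_of_level_eq (n := l) (m := lvl x) (by omega)
    (.cons hxb .nil) (by simp [hl])
  refine ⟨l, by omega, hly, e.append h, ?_, ?_⟩
  · intro v hv
    rcases (Walk.mem_support_append_iff e h).mp hv with hv | hv
    exacts [hle v hv, hh v hv]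
  · simp only [Walk.length_append, Walk.length_cons, Walk.length_nil] at he ⊢
    omega

theorem hasCanonicalPath_length (hT : IsAugmentedTree o p lvl Eh) {x y : X} :
    ∀ w : (augmentedGraph p Eh).Walk x y, HasCanonicalPath p Eh lvl x y w.length
  | .nil => ⟨lvl x, le_rfl, le_rfl, .nil, by simp [hT.level_ancestor le_rfl], by simp⟩
  | .cons (v := b) hxb w => by
    have h := hT.hasCanonicalPath_length w
    obtain ⟨-, hpx | hpb | hxb' | hbx⟩ := id hxb
    · exact hT.hasCanonicalPath_cons_of_parent_eq hxb hpx h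
    · exact hT.hasCanonicalPath_cons_of_eq_parent hxb hpb h
    · exact hT.hasCanonicalPath_cons_of_level_eq hxb (hT.horizontal x b hxb').1 h
    · exact hT.hasCanonicalPath_cons_of_level_eq hxb (hT.horizontal b x hbx).1.symm h

theorem exists_level_dist_ancestor_le (hT : IsAugmentedTree o p lvl Eh) {M : ℕ}
    (hgeo : ∀ (x y : X) (wk : (augmentedGraph p Eh).Walk x y),
      wk.length = (augmentedGraph p Eh).dist x y →
      (∀ v ∈ wk.support, lvl v = lvl x) → wk.length ≤ M)
    (x y : X) :
    ∃ l ≤ lvl x, l ≤ lvl y ∧ lvl x + lvl y ≤ 2 * l + (augmentedGraph p Eh).dist x y ∧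
      ∀ n ≤ l, (augmentedGraph p Eh).dist (ancestor p lvl n x) (ancestor p lvl n y) ≤ M := by
  obtain ⟨w, hw⟩ := hT.connected.exists_walk_length_eq_dist x y
  obtain ⟨l, hlx, hly, h, hh, hlen⟩ := hT.hasCanonicalPath_length w
  have hgeod :
      h.length = (augmentedGraph p Eh).dist (ancestor p lvl l x) (ancestor p lvl l y) := by
    have := hT.dist_le_dist_ancestor l x y
    have := dist_le h
    omega
  have hM : h.length ≤ M :=
    hgeo _ _ h hgeod fun v hv => (hh v hv).trans (hh _ h.start_mem_support).symm
  refine ⟨l, hlx, hly, by omega, fun n hn => ?_⟩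
  obtain ⟨h', hlen', -⟩ := hT.exists_walk_ancestor_of_level_eq hn h hh
  rw [← hT.ancestor_ancestor hn x, ← hT.ancestor_ancestor hn y]
  exact (dist_le h').trans (hlen'.trans hM)

theorem min_gromovProduct_sub_le (hT : IsAugmentedTree o p lvl Eh) {M : ℕ}
    (hgeo : ∀ (x y : X) (wk : (augmentedGraph p Eh).Walk x y),
      wk.length = (augmentedGraph p Eh).dist x y →
      (∀ v ∈ wk.support, lvl v = lvl x) → wk.length ≤ M)
    (x y z : X) :
    min (gromovProduct (augmentedGraph p Eh) o x z) (gromovProduct (augmentedGraph p Eh) o z y)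
      - M ≤ gromovProduct (augmentedGraph p Eh) o x y := by
  obtain ⟨l₁, hl₁x, -, hxz, hM₁⟩ := hT.exists_level_dist_ancestor_le hgeo x z
  obtain ⟨l₂, -, hl₂y, hzy, hM₂⟩ := hT.exists_level_dist_ancestor_le hgeo z y
  set n := min l₁ l₂ with hn
  have hxy : (augmentedGraph p Eh).dist x y + 2 * n ≤ lvl x + lvl y + 2 * M := by
    have := hT.dist_le_dist_ancestor n x y
    have := hT.connected.dist_triangle (u := ancestor p lvl n x) (v := ancestor p lvl n z)
      (w := ancestor p lvl n y)
    have := hM₁ n (min_le_left _ _)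
    have := hM₂ n (min_le_right _ _)
    omega
  have hxz' : gromovProduct (augmentedGraph p Eh) o x z ≤ l₁ := by
    have : (lvl x + lvl z : ℝ) ≤ 2 * l₁ + (augmentedGraph p Eh).dist x z := by exact_mod_cast hxz
    rw [hT.gromovProduct_eq]
    linarith
  have hzy' : gromovProduct (augmentedGraph p Eh) o z y ≤ l₂ := by
    have : (lvl z + lvl y : ℝ) ≤ 2 * l₂ + (augmentedGraph p Eh).dist z y := by exact_mod_cast hzy
    rw [hT.gromovProduct_eq]
    linarith
  have hmin := min_le_min hxz' hzy'
  have hxy' : ((augmentedGraph p Eh).dist x y : ℝ) + 2 * n ≤ lvl x + lvl y + 2 * M := by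
    exact_mod_cast hxy
  rw [← Nat.cast_min, ← hn] at hmin
  rw [hT.gromovProduct_eq x y]
  linarith

end IsAugmentedTree

end AugmentedTree

theorem augmentedTree_hyperbolic_of_bounded_horizontal_geodesics_general
    {X : Type*} (o : X) (p : X → X) (lvl : X → ℕ) (Eh : X → X → Prop)
    (hEh : ∀ x y, Eh x y → lvl x = lvl y ∧ (p x = p y ∨ Eh (p x) (p y)))
    (hroot : lvl o = 0) (hproot : p o = o)
    (hlvl : ∀ x, x ≠ o → lvl (p x) + 1 = lvl x)
    (M : ℕ)
    (hgeo : ∀ (x y : X) (wk : (augmentedGraph p Eh).Walk x y),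
      wk.length = (augmentedGraph p Eh).dist x y →
      (∀ v ∈ wk.support, lvl v = lvl x) → wk.length ≤ M) :
    ∃ δ : ℝ, 0 ≤ δ ∧ ∀ x y z : X,
      min ((((augmentedGraph p Eh).dist o x : ℝ) + ((augmentedGraph p Eh).dist o z : ℝ)
            - ((augmentedGraph p Eh).dist x z : ℝ)) / 2)
          ((((augmentedGraph p Eh).dist o z : ℝ) + ((augmentedGraph p Eh).dist o y : ℝ)
            - ((augmentedGraph p Eh).dist z y : ℝ)) / 2) - δ ≤
        (((augmentedGraph p Eh).dist o x : ℝ) + ((augmentedGraph p Eh).dist o y : ℝ)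
            - ((augmentedGraph p Eh).dist x y : ℝ)) / 2 :=
  have hT : IsAugmentedTree o p lvl Eh := ⟨hEh, hroot, hproot, hlvl⟩
  ⟨M, M.cast_nonneg, hT.min_gromovProduct_sub_le hgeo⟩

/-- Hyperbolicity criterion for augmented trees: if horizontal geodesics have
uniformly bounded length `M`, then the augmented tree is Gromov hyperbolic. -/
theorem augmentedTree_hyperbolic_of_bounded_horizontal_geodesics
    {X : Type*} (o : X) (p : X → X) (lvl : X → ℕ) (Eh : X → X → Prop)
    (hEhsymm : Symmetric Eh)
    (hEh : ∀ x y, Eh x y → lvl x = lvl y ∧ (p x = p y ∨ Eh (p x) (p y)))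
    (hEhne : ∀ x, ¬ Eh x x)
    (hroot : lvl o = 0) (hproot : p o = o)
    (hlvl : ∀ x, x ≠ o → lvl (p x) + 1 = lvl x)
    (hconn : (augmentedGraph p Eh).Connected)
    (M : ℕ)
    (hgeo : ∀ (x y : X) (wk : (augmentedGraph p Eh).Walk x y),
      wk.length = (augmentedGraph p Eh).dist x y →
      (∀ v ∈ wk.support, lvl v = lvl x) → wk.length ≤ M) :
    ∃ δ : ℝ, 0 ≤ δ ∧ ∀ x y z : X,
      min ((((augmentedGraph p Eh).dist o x : ℝ) + ((augmentedGraph p Eh).dist o z : ℝ)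
            - ((augmentedGraph p Eh).dist x z : ℝ)) / 2)
          ((((augmentedGraph p Eh).dist o z : ℝ) + ((augmentedGraph p Eh).dist o y : ℝ)
            - ((augmentedGraph p Eh).dist z y : ℝ)) / 2) - δ ≤
        (((augmentedGraph p Eh).dist o x : ℝ) + ((augmentedGraph p Eh).dist o y : ℝ)
            - ((augmentedGraph p Eh).dist x y : ℝ)) / 2 :=
  augmentedTree_hyperbolic_of_bounded_horizontal_geodesics_general o p lvl Eh hEh hroot hproot hlvl
    M hgeo
end

section
/- Let T and T′ be horizontal components, T = {u₁,…,u_m} ⊆ X_n, T′ = {u′₁,…,u′_m} ⊆ X_{m'}, equivalent via an affine map g(x) = A^{n−m'}x + d (d ∈ ℤ^d) with g∘S_{uᵢ} = S_{u′ᵢ} for all i. Then for all i, j ∈ {1,…,m} and digits k, ℓ ∈ Σ: S_{uᵢk} = S_{u_jℓ} iff S_{u′ᵢk} = S_{u′_jℓ}, and S_{uᵢk}(J) ∩ S_{u_jℓ}(J) ≠ ∅ iff S_{u′ᵢk}(J) ∩ S_{u′_jℓ}(J) ≠ ∅. -/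
/-- The composition `S_{u 0} ∘ ⋯ ∘ S_{u (k-1)}` along a word `u` of length `k`. -/
def finWordMap {N : ℕ} {β : Type*} (S : Fin N → β → β) {k : ℕ} (u : Fin k → Fin N) : β → β :=
  (List.ofFn u).foldr (fun i f => S i ∘ f) id

/-- Equivalence of horizontal components via an integer-affine conjugation `g`
is inherited by offspring: identifications and intersections of children agree. -/
theorem equivalent_components_offspring {d N : ℕ}
    (A : EuclideanSpace ℝ (Fin d) ≃ₗ[ℝ] EuclideanSpace ℝ (Fin d))
    (dig : Fin N → EuclideanSpace ℝ (Fin d))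
    (S : Fin N → EuclideanSpace ℝ (Fin d) → EuclideanSpace ℝ (Fin d))
    (hS : ∀ i x, S i x = A.symm (x + dig i))
    (J : Set (EuclideanSpace ℝ (Fin d))) (hJne : J.Nonempty) (hJc : IsCompact J)
    (hJinv : ∀ i, S i '' J ⊆ J)
    (m n n' : ℕ)
    (u : Fin m → (Fin n → Fin N)) (u' : Fin m → (Fin n' → Fin N))
    (dvec : EuclideanSpace ℝ (Fin d)) (hdvec : ∀ i, ∃ z : ℤ, dvec i = (z : ℝ))
    (g : EuclideanSpace ℝ (Fin d) → EuclideanSpace ℝ (Fin d))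
    (hg : ∀ x, g x = (A ^ ((n : ℤ) - (n' : ℤ))) x + dvec)
    (hconj : ∀ i : Fin m, g ∘ finWordMap S (u i) = finWordMap S (u' i)) :
    ∀ (i j : Fin m) (k l : Fin N),
      ((finWordMap S (u i) ∘ S k = finWordMap S (u j) ∘ S l) ↔
        (finWordMap S (u' i) ∘ S k = finWordMap S (u' j) ∘ S l)) ∧
      (((finWordMap S (u i) ∘ S k) '' J ∩ (finWordMap S (u j) ∘ S l) '' J).Nonempty ↔
        ((finWordMap S (u' i) ∘ S k) '' J ∩ (finWordMap S (u' j) ∘ S l) '' J).Nonempty) := by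
  intro i j k l
  have hgi : Function.Injective g := by
    intro x y hxy
    rw [hg, hg] at hxy
    exact (A ^ ((n : ℤ) - (n' : ℤ))).injective (add_right_cancel hxy)
  have h1 : finWordMap S (u' i) ∘ S k = g ∘ (finWordMap S (u i) ∘ S k) := by
    rw [← hconj i]; rfl
  have h2 : finWordMap S (u' j) ∘ S l = g ∘ (finWordMap S (u j) ∘ S l) := by
    rw [← hconj j]; rfl
  refine ⟨⟨fun h => by rw [h1, h2, h], fun h => ?_⟩, ?_⟩
  · rw [h1, h2] at h
    funext x
    exact hgi (congrFun h x)
  · rw [h1, h2, Set.image_comp g, Set.image_comp g, ← Set.image_inter hgi,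
      Set.image_nonempty]
end
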